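/- A Vandermonde parity-check matrix with r rows and distinct nodes permits unique recovery of k-sparse vectors whenever 2k ≤ r: if α : Fin n → F is injective, H_{i,j} = α(j)^i for i ∈ Fin r, 2k ≤ r, and x, x' : Fin n → F each have at most k nonzero entries with H·x = H·x', then x = x'. (This is the perfect-recovery condition k ≤ ⌊(m̃₁+1)/2⌋ for syndrome decoding with the parity-check matrix of an [n, n−r] Reed–Solomon code.) -/

import Mathlib

/-!
The difference `y = x - x'` has at most `2k ≤ r` nonzero entries and lies in the kernel of `H`.
Restricted to the support `S` of `y`, the first `#S` rows of `H` form a square Vandermonde matrix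
on distinct nodes, which is nonsingular; hence `y` vanishes on `S`, i.e. `y = 0`.
-/

open Finset Matrix

theorem Finset.card_filter_sub_ne_zero_le {ι M : Type*} [Fintype ι] [AddGroup M] [DecidableEq M]
    (x x' : ι → M) :
    #{j | (x - x') j ≠ 0} ≤ #{j | x j ≠ 0} + #{j | x' j ≠ 0} := by
  classical
  refine (card_le_card fun j hj => ?_).trans (card_union_le _ _)
  simp only [mem_filter, mem_univ, true_and, mem_union, Pi.sub_apply] at hj ⊢
  by_contra! hxx'
  exact hj (by rw [hxx'.1, hxx'.2, sub_zero])

section Vandermonde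

variable {R ι : Type*} [CommRing R] [IsDomain R]

theorem Finset.eq_zero_of_forall_sum_mul_pow_eq_zero {s : Finset ι} {α : ι → R}
    (hα : Set.InjOn α s) {y : ι → R} (hy : ∀ i < #s, ∑ j ∈ s, y j * α j ^ i = 0) :
    ∀ j ∈ s, y j = 0 := by
  let e := s.equivFin
  have hfin : (fun k => y (e.symm k)) = 0 := by
    refine eq_zero_of_forall_pow_sum_mul_pow_eq_zero (f := fun k => α (e.symm k))
      (fun k l hkl => e.symm.injective (Subtype.ext (hα (e.symm k).2 (e.symm l).2 hkl)))
      fun i => ?_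
    rw [← hy i i.2, ← s.sum_coe_sort]
    exact e.symm.sum_comp fun j : s => y j * α j ^ (i : ℕ)
  intro j hj
  simpa [e] using congrFun hfin (e ⟨j, hj⟩)

theorem eq_zero_of_card_support_le_of_forall_sum_mul_pow_eq_zero [Fintype ι] [DecidableEq R]
    {α : ι → R} (hα : Function.Injective α) {y : ι → R} {r : ℕ} (hy : #{j | y j ≠ 0} ≤ r)
    (hsum : ∀ i < r, ∑ j, y j * α j ^ i = 0) : y = 0 := by
  funext j
  by_contra hj
  refine hj (eq_zero_of_forall_sum_mul_pow_eq_zero (s := {j | y j ≠ 0}) hα.injOn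
    (fun i hi => ?_) j (by simpa using hj))
  rw [sum_filter_of_ne fun j _ hj => left_ne_zero_of_mul hj]
  exact hsum i (hi.trans_le hy)

end Vandermonde

theorem vandermonde_sparse_recovery_general {F : Type*} [Field F] [DecidableEq F]
    (n r k : ℕ)
    (α : Fin n → F) (hα : Function.Injective α)
    (H : Matrix (Fin r) (Fin n) F) (hH : ∀ i j, H i j = α j ^ (i : ℕ))
    (hkr : 2 * k ≤ r)
    (x x' : Fin n → F)
    (hx : (Finset.univ.filter fun j : Fin n => x j ≠ 0).card ≤ k)
    (hx' : (Finset.univ.filter fun j : Fin n => x' j ≠ 0).card ≤ k)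
    (h : H.mulVec x = H.mulVec x') :
    x = x' := by
  have hsparse : #{j | (x - x') j ≠ 0} ≤ r :=
    (card_filter_sub_ne_zero_le x x').trans (by omega)
  have hsyndrome : ∀ i < r, ∑ j, (x - x') j * α j ^ i = 0 := by
    intro i hi
    have hker : (H *ᵥ (x - x')) ⟨i, hi⟩ = 0 := by rw [mulVec_sub, h, sub_self, Pi.zero_apply]
    rw [← hker]
    exact sum_congr rfl fun j _ => (hH ⟨i, hi⟩ j ▸ mul_comm _ _)
  exact sub_eq_zero.mp
    (eq_zero_of_card_support_le_of_forall_sum_mul_pow_eq_zero hα hsparse hsyndrome)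

/-- A Vandermonde parity-check matrix with `r` rows and distinct
nodes permits unique recovery of `k`-sparse vectors whenever `2k ≤ r`
(the perfect-recovery condition for syndrome decoding with the parity-check
matrix of an `[n, n−r]` Reed–Solomon code). -/
theorem vandermonde_sparse_recovery {F : Type*} [Field F] [DecidableEq F]
    (n r k : ℕ) (hr : 0 < r) (hrn : r < n) (hk : 0 < k)
    (α : Fin n → F) (hα : Function.Injective α)
    (H : Matrix (Fin r) (Fin n) F) (hH : ∀ i j, H i j = α j ^ (i : ℕ))
    (hkr : 2 * k ≤ r)
    (x x' : Fin n → F)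
    (hx : (Finset.univ.filter fun j : Fin n => x j ≠ 0).card ≤ k)
    (hx' : (Finset.univ.filter fun j : Fin n => x' j ≠ 0).card ≤ k)
    (h : H.mulVec x = H.mulVec x') :
    x = x' :=
  vandermonde_sparse_recovery_general n r k α hα H hH hkr x x' hx hx' h
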